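/- Let γ, γ̂ be closed unit-speed curves in spheres with lengths L, L̂ and geodesic curvatures k₁, k̂₁. Then W = (1/4)·∫₀^{L̂}∫₀^{L}(4 + k₁² + k̂₁²) ds dŝ > 2π². -/

import Mathlib

/-!
On the unit sphere a unit-speed curve satisfies `⟪γ'', γ⟫ = -1`, so `k₁² = ‖γ''‖² - 1`.
Since `γ` is closed, `γ'` is `L`-periodic with mean zero, and Wirtinger's inequality gives
`∫ ‖γ''‖² ≥ (2π/L)² ∫ ‖γ'‖² = 4π²/L`, i.e. `∫ k₁² ≥ 4π²/L - L`. Integrating the integrand of the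
Willmore functional then gives `W ≥ L L̂/2 + π² (L/L̂ + L̂/L) > 2π²`.
-/

open Real MeasureTheory Set intervalIntegral Complex

theorem ContinuousOn.memLp_restrict_Ioc {E : Type*} [NormedAddCommGroup E] {f : ℝ → E}
    {a b : ℝ} (hf : ContinuousOn f (Icc a b)) (p : ENNReal) :
    MemLp f p (volume.restrict (Ioc a b)) := by
  obtain ⟨C, hC⟩ := isCompact_Icc.exists_bound_of_continuousOn hf
  refine (memLp_top_of_bound
    ((hf.mono Ioc_subset_Icc_self).aestronglyMeasurable measurableSet_Ioc) C ?_
    ).mono_exponent_of_measure_support_ne_top (s := univ) (by simp) (by simp) le_top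
  exact (ae_restrict_iff' measurableSet_Ioc).mpr
    (ae_of_all _ fun x hx => hC x (Ioc_subset_Icc_self hx))

/-- The zeroth Fourier coefficient of `g` vanishes and the others are `(b - a) / (2πin)` times
those of `g'`, so the claim follows from Parseval's identity. -/
theorem wirtinger_inequality {a b : ℝ} (hab : a < b) {g g' : ℝ → ℂ}
    (hg : ∀ x ∈ Icc a b, HasDerivAt g (g' x) x) (hg' : ContinuousOn g' (Icc a b))
    (hper : g b = g a) (hmean : ∫ x in a..b, g x = 0) :
    (2 * π / (b - a)) ^ 2 * ∫ x in a..b, ‖g x‖ ^ 2 ≤ ∫ x in a..b, ‖g' x‖ ^ 2 := by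
  have hba : 0 < b - a := sub_pos.mpr hab
  have hgc : ContinuousOn g (Icc a b) := fun x hx => (hg x hx).continuousAt.continuousWithinAt
  have hcoeff : ∀ n : ℤ, (2 * π / (b - a)) ^ 2 * ‖fourierCoeffOn hab g n‖ ^ 2
      ≤ ‖fourierCoeffOn hab g' n‖ ^ 2 := by
    intro n
    rcases eq_or_ne n 0 with rfl | hn
    · have hc0 : fourierCoeffOn hab g 0 = 0 := by simp [fourierCoeffOn_eq_integral, hmean]
      rw [hc0, norm_zero, zero_pow two_ne_zero, mul_zero]
      positivity
    · have h := fourierCoeffOn_of_hasDerivAt hab hn (by rwa [uIcc_of_le hab.le])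
        (hg'.intervalIntegrable_of_Icc hab.le)
      rw [hper, sub_self, mul_zero, zero_sub, ← ofReal_sub] at h
      have hn1 : (1 : ℝ) ≤ |(n : ℝ)| := by exact_mod_cast Int.one_le_abs hn
      have hnorm : 2 * π / (b - a) * ‖fourierCoeffOn hab g n‖ * |(n : ℝ)|
          = ‖fourierCoeffOn hab g' n‖ := by
        rw [h, norm_mul, norm_neg, norm_mul, norm_real, Real.norm_of_nonneg hba.le]
        simp only [neg_mul, one_div, inv_neg, mul_inv_rev, inv_I, mul_neg, neg_neg,
          Complex.norm_mul, norm_inv, norm_intCast, norm_I, norm_real, norm_eq_abs,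
          abs_of_pos pi_pos, Complex.norm_ofNat, one_mul]
        field_simp
      rw [← hnorm, mul_pow _ |(n : ℝ)|, mul_pow]
      exact le_mul_of_one_le_right (by positivity) (one_le_pow₀ hn1)
  have hP := hasSum_sq_fourierCoeffOn hab (hgc.memLp_restrict_Ioc 2)
  have hP' := hasSum_sq_fourierCoeffOn hab (hg'.memLp_restrict_Ioc 2)
  have := hasSum_le hcoeff (hP.mul_left _) hP'
  rw [smul_eq_mul, smul_eq_mul, mul_left_comm, mul_le_mul_iff_right₀ (inv_pos.mpr hba)] at this
  exact this

theorem wirtinger_inequality_real {a b : ℝ} (hab : a < b) {g g' : ℝ → ℝ}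
    (hg : ∀ x ∈ Icc a b, HasDerivAt g (g' x) x) (hg' : ContinuousOn g' (Icc a b))
    (hper : g b = g a) (hmean : ∫ x in a..b, g x = 0) :
    (2 * π / (b - a)) ^ 2 * ∫ x in a..b, g x ^ 2 ≤ ∫ x in a..b, g' x ^ 2 := by
  have := wirtinger_inequality hab (g := fun x => (g x : ℂ)) (g' := fun x => (g' x : ℂ))
    (fun x hx => (hg x hx).ofReal_comp) (continuous_ofReal.comp_continuousOn hg')
    (by rw [hper]) (by rw [integral_ofReal, hmean, ofReal_zero])
  simpa only [norm_real, Real.norm_eq_abs, sq_abs] using this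

theorem wirtinger_inequality_euclidean {ι : Type*} [Fintype ι] {a b : ℝ} (hab : a < b)
    {g g' : ℝ → EuclideanSpace ℝ ι}
    (hg : ∀ x ∈ Icc a b, HasDerivAt g (g' x) x) (hg' : ContinuousOn g' (Icc a b))
    (hper : g b = g a) (hmean : ∫ x in a..b, g x = 0) :
    (2 * π / (b - a)) ^ 2 * ∫ x in a..b, ‖g x‖ ^ 2 ≤ ∫ x in a..b, ‖g' x‖ ^ 2 := by
  have hgc : ContinuousOn g (Icc a b) := fun x hx => (hg x hx).continuousAt.continuousWithinAt
  have hsplit : ∀ f : ℝ → EuclideanSpace ℝ ι, ContinuousOn f (Icc a b) →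
      ∫ x in a..b, ‖f x‖ ^ 2 = ∑ i, ∫ x in a..b, f x i ^ 2 := by
    intro f hf
    simp only [EuclideanSpace.norm_sq_eq, Real.norm_eq_abs, sq_abs]
    refine integral_finsetSum fun i _ => ContinuousOn.intervalIntegrable_of_Icc hab.le ?_
    exact ((EuclideanSpace.proj i).continuous.comp_continuousOn hf).pow 2
  rw [hsplit g hgc, hsplit g' hg', Finset.mul_sum]
  refine Finset.sum_le_sum fun i _ => wirtinger_inequality_real hab
    (fun x hx => (EuclideanSpace.proj (𝕜 := ℝ) i).hasFDerivAt.comp_hasDerivAt x (hg x hx))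
    ((EuclideanSpace.proj i).continuous.comp_continuousOn hg') (by rw [hper]) ?_
  have := (EuclideanSpace.proj (𝕜 := ℝ) i).intervalIntegral_comp_comm
    (hgc.intervalIntegrable_of_Icc (μ := volume) hab.le)
  simpa [hmean] using this

theorem Function.Periodic.deriv {E : Type*} [NormedAddCommGroup E] [NormedSpace ℝ E]
    {f : ℝ → E} {c : ℝ} (hf : Function.Periodic f c) : Function.Periodic (deriv f) c := by
  intro x
  rw [← deriv_comp_add_const, funext hf]

theorem ContDiff.continuous_deriv_deriv {E : Type*} [NormedAddCommGroup E] [NormedSpace ℝ E]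
    {f : ℝ → E} (hf : ContDiff ℝ 2 f) : Continuous (deriv (deriv f)) :=
  (hf.deriv' (n := 1)).continuous_deriv le_rfl

theorem four_pi_sq_div_le_integral_norm_deriv_deriv_sq {ι : Type*} [Fintype ι] {L : ℝ}
    (hL : 0 < L) {γ : ℝ → EuclideanSpace ℝ ι} (hγ : ContDiff ℝ 2 γ) (hper : Function.Periodic γ L)
    (hunit : ∀ s, ‖deriv γ s‖ = 1) :
    4 * π ^ 2 / L ≤ ∫ s in (0:ℝ)..L, ‖deriv (deriv γ) s‖ ^ 2 := by
  have hγ' : ContDiff ℝ 1 (deriv γ) := hγ.deriv' (n := 1)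
  have hmean : ∫ s in (0:ℝ)..L, deriv γ s = 0 := by
    have hclosed : γ L = γ 0 := by simpa using hper 0
    rw [integral_deriv_eq_sub (fun x _ => hγ.differentiable (by norm_num) x)
      ((hγ.continuous_deriv (by norm_num)).intervalIntegrable 0 L), hclosed, sub_self]
  have := wirtinger_inequality_euclidean hL
    (fun x _ => (hγ'.differentiable one_ne_zero x).hasDerivAt)
    hγ.continuous_deriv_deriv.continuousOn (by simpa using hper.deriv 0) (by simpa using hmean)
  simp only [sub_zero, hunit, one_pow, intervalIntegral.integral_const, smul_eq_mul,
    mul_one] at this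
  calc 4 * π ^ 2 / L = (2 * π / L) ^ 2 * L := by field_simp; ring
    _ ≤ _ := this

section SphericalCurve

variable {E : Type*} [NormedAddCommGroup E] [InnerProductSpace ℝ E]

theorem inner_deriv_self_eq_zero_of_norm_eq {f : ℝ → E} (hf : Differentiable ℝ f) {c : ℝ}
    (hnorm : ∀ t, ‖f t‖ = c) (t : ℝ) : inner ℝ (deriv f t) (f t) = 0 := by
  have hconst : (fun x => inner ℝ (f x) (f x)) = fun _ => c ^ 2 := by
    funext x
    rw [real_inner_self_eq_norm_sq, hnorm]
  have h := ((hf t).hasDerivAt.inner ℝ (hf t).hasDerivAt).unique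
    (hconst ▸ hasDerivAt_const t (c ^ 2))
  rw [real_inner_comm (deriv f t)] at h
  linarith

theorem inner_deriv_deriv_self_eq_neg_one {γ : ℝ → E} (hγ : ContDiff ℝ 2 γ)
    (hsph : ∀ s, ‖γ s‖ = 1) (hunit : ∀ s, ‖deriv γ s‖ = 1) (s : ℝ) :
    inner ℝ (deriv (deriv γ) s) (γ s) = -1 := by
  have hd : Differentiable ℝ γ := hγ.differentiable (by norm_num)
  have hd' : Differentiable ℝ (deriv γ) := (hγ.deriv' (n := 1)).differentiable one_ne_zero
  have h := ((hd' s).hasDerivAt.inner ℝ (hd s).hasDerivAt).unique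
    (funext (inner_deriv_self_eq_zero_of_norm_eq hd hsph) ▸ hasDerivAt_const s (0 : ℝ))
  rw [real_inner_self_eq_norm_sq, hunit] at h
  linarith

theorem norm_deriv_deriv_add_self_sq {γ : ℝ → E} (hγ : ContDiff ℝ 2 γ)
    (hsph : ∀ s, ‖γ s‖ = 1) (hunit : ∀ s, ‖deriv γ s‖ = 1) (s : ℝ) :
    ‖deriv (deriv γ) s + γ s‖ ^ 2 = ‖deriv (deriv γ) s‖ ^ 2 - 1 := by
  rw [norm_add_sq_real, inner_deriv_deriv_self_eq_neg_one hγ hsph hunit, hsph]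
  ring

end SphericalCurve

theorem four_pi_sq_div_sub_le_integral_norm_deriv_deriv_add_self_sq {ι : Type*} [Fintype ι]
    {L : ℝ} (hL : 0 < L) {γ : ℝ → EuclideanSpace ℝ ι} (hγ : ContDiff ℝ 2 γ)
    (hper : Function.Periodic γ L) (hsph : ∀ s, ‖γ s‖ = 1) (hunit : ∀ s, ‖deriv γ s‖ = 1) :
    4 * π ^ 2 / L - L ≤ ∫ s in (0:ℝ)..L, ‖deriv (deriv γ) s + γ s‖ ^ 2 := by
  rw [integral_congr fun s _ => norm_deriv_deriv_add_self_sq hγ hsph hunit s,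
    integral_sub (f := fun s => ‖deriv (deriv γ) s‖ ^ 2)
      ((hγ.continuous_deriv_deriv.norm.pow 2).intervalIntegrable 0 L)
      intervalIntegrable_const, intervalIntegral.integral_const, smul_eq_mul, mul_one, sub_zero]
  linarith [four_pi_sq_div_le_integral_norm_deriv_deriv_sq hL hγ hper hunit]

theorem integral_integral_const_add_add {f g : ℝ → ℝ} (c : ℝ) {a b a' b' : ℝ}
    (hf : IntervalIntegrable f volume a b) (hg : IntervalIntegrable g volume a' b') :
    ∫ t in a'..b', ∫ s in a..b, (c + f s + g t) =
      (b - a) * (b' - a') * c + (b' - a') * (∫ s in a..b, f s) + (b - a) * ∫ t in a'..b', g t := by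
  have hinner : ∀ t, ∫ s in a..b, (c + f s + g t) = (b - a) * (c + g t) + ∫ s in a..b, f s := by
    intro t
    rw [integral_add (intervalIntegrable_const.add hf) intervalIntegrable_const,
      integral_add intervalIntegrable_const hf, intervalIntegral.integral_const,
      intervalIntegral.integral_const, smul_eq_mul, smul_eq_mul]
    ring
  simp_rw [hinner, mul_add]
  rw [integral_add (intervalIntegrable_const.add (hg.const_mul _)) intervalIntegrable_const,
    integral_add intervalIntegrable_const (hg.const_mul _), intervalIntegral.integral_const,
    intervalIntegral.integral_const, intervalIntegral.integral_const_mul, smul_eq_mul, smul_eq_mul]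
  ring

/-- Every tensor-product torus has Willmore functional exceeding `2π²`: for closed
unit-speed curves `γ ⊂ Sⁿ`, `γ̂ ⊂ Sᵐ` with lengths `L, L̂` and geodesic curvatures
`k₁, k̂₁`, one has `(1/4)∫₀^{L̂}∫₀^{L}(4 + k₁² + k̂₁²) ds dŝ > 2π²`. -/
theorem willmore_tensor_gt (n m : ℕ) (L Lh : ℝ) (hL : 0 < L) (hLh : 0 < Lh)
    (γ : ℝ → EuclideanSpace ℝ (Fin (n + 1)))
    (γh : ℝ → EuclideanSpace ℝ (Fin (m + 1)))
    (hsm : ContDiff ℝ 2 γ) (hsmh : ContDiff ℝ 2 γh)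
    (hclosed : ∀ s, γ (s + L) = γ s) (hclosedh : ∀ t, γh (t + Lh) = γh t)
    (hsph : ∀ s, ‖γ s‖ = 1) (hsphh : ∀ t, ‖γh t‖ = 1)
    (hunit : ∀ s, ‖deriv γ s‖ = 1) (hunith : ∀ t, ‖deriv γh t‖ = 1)
    (k₁ kh₁ : ℝ → ℝ)
    (hk : ∀ s, k₁ s = ‖deriv (deriv γ) s + γ s‖)
    (hkh : ∀ t, kh₁ t = ‖deriv (deriv γh) t + γh t‖) :
    2 * π ^ 2 <
      (1/4) * ∫ t in (0:ℝ)..Lh, ∫ s in (0:ℝ)..L, (4 + k₁ s ^ 2 + kh₁ t ^ 2) := by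
  have hA :=
    four_pi_sq_div_sub_le_integral_norm_deriv_deriv_add_self_sq hL hsm hclosed hsph hunit
  have hAh :=
    four_pi_sq_div_sub_le_integral_norm_deriv_deriv_add_self_sq hLh hsmh hclosedh hsphh hunith
  simp only [hk, hkh]
  rw [integral_integral_const_add_add (f := fun s => ‖deriv (deriv γ) s + γ s‖ ^ 2)
    (g := fun t => ‖deriv (deriv γh) t + γh t‖ ^ 2) 4
    (((hsm.continuous_deriv_deriv.add hsm.continuous).norm.pow 2).intervalIntegrable 0 L)
    (((hsmh.continuous_deriv_deriv.add hsmh.continuous).norm.pow 2).intervalIntegrable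
      0 Lh)]
  have hamgm : 2 ≤ Lh / L + L / Lh := by
    rw [div_add_div _ _ hL.ne' hLh.ne', le_div_iff₀ (by positivity)]
    nlinarith [sq_nonneg (L - Lh)]
  calc 2 * π ^ 2 < L * Lh / 2 + π ^ 2 * (Lh / L + L / Lh) := by
        nlinarith [pi_pos, mul_pos hL hLh]
    _ = 1 / 4 * (L * Lh * 4 + Lh * (4 * π ^ 2 / L - L) + L * (4 * π ^ 2 / Lh - Lh)) := by
      field_simp; ring
    _ ≤ _ := by simp only [sub_zero]; gcongr
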